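/- Lottery reduction for ExistsNecEJR: let V be a finite set of n ≥ 1 voters with approval profile A : V → 2^C over a finite candidate set C, let k ≥ 1, and let W ⊆ C with |W| = k. Let V⁺ be a set of n new voters and C⁺ a set of k new candidates, disjoint from V and C respectively. In the extended election with voter set V ∪ V⁺ (2n voters), candidate set C ∪ C⁺, and parameter 2k, the plausible approval profiles are exactly those in which each original voter i ∈ V approves exactly A_i and each new voter in V⁺ approves exactly one candidate of W ∪ C⁺ (a singleton {c} with c ∈ W ∪ C⁺, chosen independently per voter). Then W satisfies EJR with respect to (A_i)_{i∈V} and parameter k if and only if there exists a committee W' ⊆ C ∪ C⁺ with |W'| = 2k that satisfies EJR (with respect to parameter 2k over the 2n voters) under every plausible approval profile of the extended election. -/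

import Mathlib

/-!
Both the number of voters and the committee size double, so a group of original voters is
`ℓ`-cohesive in the extended election iff it is in the original one, with the same common
approvals and the same representation by `W ∪ C⁺`. A cohesive group containing a new voter has
`ℓ = 1` and is represented by that voter, who approves a single member of `W ∪ C⁺`; hence `W ∪ C⁺`
is necessarily EJR if `W` is EJR. Conversely, when all new voters approve the same `c`, they form a
`1`-cohesive group, so every necessarily EJR committee contains `c`. A committee of size `2k` doing
this for all `c ∈ W ∪ C⁺` is `W ∪ C⁺` itself, and EJR of the extended election then transfers back.
-/

/-- A committee `W` satisfies extended justified representation (EJR) with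
respect to the approval profile `A` and parameter `k`: for every `ℓ ≥ 1` and
every `ℓ`-cohesive group `V'` (i.e. `k * |V'| ≥ ℓ * n` and the voters of `V'`
commonly approve at least `ℓ` candidates), some voter of `V'` approves at
least `ℓ` members of `W`. -/
def satisfiesEJR {V C : Type*} [Fintype V] [Fintype C] [DecidableEq C]
    (A : V → Finset C) (k : ℕ) (W : Finset C) : Prop :=
  ∀ ℓ : ℕ, 1 ≤ ℓ → ∀ V' : Finset V,
    ℓ * Fintype.card V ≤ k * V'.card →
    ℓ ≤ (Finset.univ.filter (fun c : C => ∀ i ∈ V', c ∈ A i)).card →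
    ∃ i ∈ V', ℓ ≤ (A i ∩ W).card

open Finset Sum

lemma Finset.image_inl_union_image_inr {α β : Type*} [DecidableEq α] [DecidableEq β]
    (s : Finset α) (t : Finset β) : s.image inl ∪ t.image inr = s.disjSum t := by
  ext (a | b) <;> simp

lemma card_image_inl_inter_disjSum {C Cp : Type*} [DecidableEq C] [DecidableEq Cp]
    (S W : Finset C) (T : Finset Cp) : (S.image inl ∩ W.disjSum T).card = (S ∩ W).card := by
  have : S.image inl ∩ W.disjSum T = (S ∩ W).image inl := by ext (a | b) <;> simp
  rw [this, card_image_of_injective _ inl_injective]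

section Election

variable {V C : Type*} [Fintype C] [DecidableEq C]

def commonApprovals (A : V → Finset C) (V' : Finset V) : Finset C :=
  univ.filter fun c => ∀ i ∈ V', c ∈ A i

lemma commonApprovals_subset {A : V → Finset C} {V' : Finset V} {i : V} (hi : i ∈ V') :
    commonApprovals A V' ⊆ A i :=
  fun _ hc => (mem_filter.mp hc).2 i hi

lemma le_card_inter_of_eq_singleton {A : V → Finset C} {V' : Finset V} {i : V} {c : C}
    {W : Finset C} {ℓ : ℕ} (hi : i ∈ V') (hAi : A i = {c}) (hc : c ∈ W)
    (hℓ : ℓ ≤ (commonApprovals A V').card) : ℓ ≤ (A i ∩ W).card :=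
  calc ℓ ≤ (commonApprovals A V').card := hℓ
    _ ≤ (A i).card := card_le_card (commonApprovals_subset hi)
    _ = (A i ∩ W).card := by rw [hAi, singleton_inter_of_mem hc]

lemma nonempty_of_cohesive [Fintype V] {V' : Finset V} {ℓ k : ℕ} (hn : 1 ≤ Fintype.card V)
    (hℓ : 1 ≤ ℓ) (h : ℓ * Fintype.card V ≤ k * V'.card) : V'.Nonempty := by
  refine card_pos.mp (Nat.pos_of_ne_zero fun h0 => ?_)
  rw [h0, mul_zero] at h
  exact (Nat.mul_pos hℓ hn).ne' (Nat.eq_zero_of_le_zero h)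

end Election

section Extension

variable {V C Vp Cp : Type*} [Fintype C] [DecidableEq C] [Fintype Cp] [DecidableEq Cp]

def extendProfile (A : V → Finset C) (c : C ⊕ Cp) : V ⊕ Vp → Finset (C ⊕ Cp) :=
  Sum.elim (fun i => (A i).image inl) fun _ => {c}

lemma card_commonApprovals_map_inl {A : V → Finset C} {B : V ⊕ Vp → Finset (C ⊕ Cp)}
    (hB : ∀ i, B (inl i) = (A i).image inl) {V' : Finset V} (hV' : V'.Nonempty) :
    (commonApprovals B (V'.map .inl)).card = (commonApprovals A V').card := by
  have : commonApprovals B (V'.map .inl) = (commonApprovals A V').image inl := by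
    obtain ⟨i, hi⟩ := hV'
    ext (c | c) <;> simp [commonApprovals, hB]
    exact ⟨i, hi⟩
  rw [this, card_image_of_injective _ inl_injective]

variable [Fintype V] [Fintype Vp]

theorem satisfiesEJR_disjSum_of_satisfiesEJR (hn : 1 ≤ Fintype.card V)
    (hVp : Fintype.card Vp = Fintype.card V) {A : V → Finset C} {k : ℕ} {W : Finset C}
    {T : Finset Cp} (hEJR : satisfiesEJR A k W) {B : V ⊕ Vp → Finset (C ⊕ Cp)}
    (hB : ∀ i, B (inl i) = (A i).image inl) (hBp : ∀ j, ∃ c ∈ W.disjSum T, B (inr j) = {c}) :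
    satisfiesEJR B (2 * k) (W.disjSum T) := by
  intro ℓ hℓ V'' hsize hcommon
  by_cases hnew : ∃ j, inr j ∈ V''
  · obtain ⟨j, hj⟩ := hnew
    obtain ⟨c, hc, hBj⟩ := hBp j
    exact ⟨inr j, hj, le_card_inter_of_eq_singleton hj hBj hc hcommon⟩
  obtain ⟨V', rfl⟩ : ∃ V' : Finset V, V'.map .inl = V'' :=
    ⟨V''.toLeft, by ext (i | j) <;> simp_all⟩
  rw [Fintype.card_sum, hVp, card_map] at hsize
  have hsize' : ℓ * Fintype.card V ≤ k * V'.card := by linarith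
  have hV' := nonempty_of_cohesive hn hℓ hsize'
  rw [← commonApprovals, card_commonApprovals_map_inl hB hV'] at hcommon
  obtain ⟨i, hi, hAi⟩ := hEJR ℓ hℓ V' hsize' hcommon
  exact ⟨inl i, mem_map_of_mem _ hi, by rwa [hB, card_image_inl_inter_disjSum]⟩

theorem mem_of_satisfiesEJR_extendProfile {k : ℕ} (hk : 1 ≤ k)
    (hVp : Fintype.card Vp = Fintype.card V) {A : V → Finset C} {c : C ⊕ Cp}
    {W' : Finset (C ⊕ Cp)} (hEJR : satisfiesEJR (extendProfile (Vp := Vp) A c) (2 * k) W') :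
    c ∈ W' := by
  have hsize : 1 * Fintype.card (V ⊕ Vp) ≤ 2 * k * (univ.map (.inr : Vp ↪ V ⊕ Vp)).card := by
    rw [Fintype.card_sum, card_map, card_univ, hVp]
    nlinarith
  have hcommon : c ∈ commonApprovals (extendProfile A c) (univ.map (.inr : Vp ↪ V ⊕ Vp)) := by
    simp [commonApprovals, extendProfile]
  obtain ⟨_, hx, hcard⟩ := hEJR 1 le_rfl _ hsize (card_pos.mpr ⟨c, hcommon⟩)
  obtain ⟨j, -, rfl⟩ := mem_map.mp hx
  obtain ⟨d, hd⟩ := card_pos.mp hcard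
  simp only [extendProfile, Function.Embedding.inr_apply, Sum.elim_inr, mem_inter,
    mem_singleton] at hd
  exact hd.1 ▸ hd.2

theorem satisfiesEJR_of_satisfiesEJR_extendProfile (hn : 1 ≤ Fintype.card V)
    (hVp : Fintype.card Vp = Fintype.card V) {A : V → Finset C} {k : ℕ} {W : Finset C}
    {T : Finset Cp} {c : C ⊕ Cp}
    (hEJR : satisfiesEJR (extendProfile (Vp := Vp) A c) (2 * k) (W.disjSum T)) :
    satisfiesEJR A k W := by
  intro ℓ hℓ V' hsize hcommon
  have hV' := nonempty_of_cohesive hn hℓ hsize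
  obtain ⟨x, hx, hcard⟩ := hEJR ℓ hℓ (V'.map .inl)
    (by rw [Fintype.card_sum, hVp, card_map]; linarith)
    (by rwa [← commonApprovals, card_commonApprovals_map_inl (fun _ => rfl) hV'])
  obtain ⟨i, hi, rfl⟩ := mem_map.mp hx
  exact ⟨i, hi, by
    rwa [Function.Embedding.inl_apply, extendProfile, Sum.elim_inl,
      card_image_inl_inter_disjSum] at hcard⟩

end Extension

/-- Lottery reduction for ExistsNecEJR: extend the election
`(V, C, A, k)` and a committee `W ⊆ C` of size `k` by a set `Vp` of `n` new
voters and a set `Cp` of `k` new candidates; in the extended election (with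
`2n` voters and parameter `2k`) the plausible profiles are exactly those where
each original voter approves exactly `A i` and each new voter approves exactly
one candidate of `W ∪ Cp` (a singleton).  Then `W` satisfies EJR (parameter
`k`) iff some size-`2k` committee over `C ⊕ Cp` satisfies EJR under every
plausible profile of the extended election. -/
theorem stmt_14 {V C Vp Cp : Type*}
    [Fintype V] [Fintype C] [DecidableEq C] [Fintype Vp] [Fintype Cp] [DecidableEq Cp]
    (hn : 1 ≤ Fintype.card V)
    (k : ℕ) (hk : 1 ≤ k)
    (hVp : Fintype.card Vp = Fintype.card V)
    (hCp : Fintype.card Cp = k)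
    (A : V → Finset C) (W : Finset C) (hW : W.card = k) :
    satisfiesEJR A k W ↔
      (∃ W' : Finset (C ⊕ Cp), W'.card = 2 * k ∧
        ∀ B : (V ⊕ Vp) → Finset (C ⊕ Cp),
          (∀ i : V, B (Sum.inl i) = (A i).image Sum.inl) →
          (∀ j : Vp, ∃ c ∈ W.image Sum.inl ∪ Finset.univ.image (Sum.inr : Cp → C ⊕ Cp),
            B (Sum.inr j) = {c}) →
          satisfiesEJR B (2 * k) W') := by
  rw [image_inl_union_image_inr]
  have hcard : (W.disjSum (univ : Finset Cp)).card = 2 * k := by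
    rw [card_disjSum, card_univ, hW, hCp, two_mul]
  constructor
  · intro hEJR
    exact ⟨_, hcard, fun B hB hBp => satisfiesEJR_disjSum_of_satisfiesEJR hn hVp hEJR hB hBp⟩
  · rintro ⟨W', hW'card, hW'⟩
    have hplausible : ∀ c ∈ W.disjSum univ, satisfiesEJR (extendProfile A c) (2 * k) W' :=
      fun c hc => hW' _ (fun _ => rfl) fun _ => ⟨c, hc, rfl⟩
    have hsub : W.disjSum univ ⊆ W' :=
      fun c hc => mem_of_satisfiesEJR_extendProfile hk hVp (hplausible c hc)
    obtain rfl : W.disjSum univ = W' := eq_of_subset_of_card_le hsub (by rw [hW'card, hcard])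
    obtain ⟨c, hc⟩ : (W.disjSum (univ : Finset Cp)).Nonempty := by
      rw [← card_pos, hcard]; omega
    exact satisfiesEJR_of_satisfiesEJR_extendProfile hn hVp (hplausible c hc)
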